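/- arXiv:2008.11682 — 3 statements merged into one kernel-verified Lean document; each statement's English description precedes it below -/
import Mathlib

section
/- Let h : ℝⁿ → ℝ be a bounded measurable function, X a ℝⁿ-valued random variable, and W a standard Gaussian random variable independent of X. Define g(x,y) = exp(h(x)·y − h(x)²/2) and Z = g(X, h(X) + W). Then E[1/Z] = 1. -/
open MeasureTheory ProbabilityTheory Real
open scoped ENNReal NNReal

lemma gauss_aux_eq (t : ℝ) (x : ℝ) :
    Real.exp (t * x) * gaussianPDFReal 0 1 x
      = Real.exp (t ^ 2 / 2) * gaussianPDFReal t 1 x := by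
  simp only [gaussianPDFReal, NNReal.coe_one, mul_one, sub_zero]
  conv_lhs => rw [mul_left_comm, ← Real.exp_add]
  conv_rhs => rw [mul_left_comm, ← Real.exp_add]
  congr 1
  rw [Real.exp_eq_exp]
  ring

lemma integrable_exp_gaussianReal (t : ℝ) :
    Integrable (fun w => Real.exp (t * w)) (gaussianReal 0 1) := by
  rw [gaussianReal_of_var_ne_zero 0 one_ne_zero,
    integrable_withDensity_iff (measurable_gaussianPDF 0 1)
      (Filter.Eventually.of_forall fun x => ENNReal.ofReal_lt_top)]
  have : (fun x => Real.exp (t * x) * (gaussianPDF 0 1 x).toReal)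
      = fun x => Real.exp (t ^ 2 / 2) * gaussianPDFReal t 1 x := by
    ext x
    rw [gaussianPDF_def, ENNReal.toReal_ofReal (gaussianPDFReal_nonneg 0 1 x), gauss_aux_eq]
  rw [this]
  exact (integrable_gaussianPDFReal t 1).const_mul _

lemma integral_exp_gaussianReal (t : ℝ) :
    ∫ w, Real.exp (t * w) ∂(gaussianReal 0 1) = Real.exp (t ^ 2 / 2) := by
  rw [gaussianReal_of_var_ne_zero 0 one_ne_zero]
  have hpdf : (gaussianPDF 0 1) = fun x => ((gaussianPDFReal 0 1 x).toNNReal : ℝ≥0∞) := by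
    ext x; rw [gaussianPDF_def]; rfl
  rw [hpdf, integral_withDensity_eq_integral_smul
    (measurable_gaussianPDFReal 0 1).real_toNNReal]
  have : (fun x => (Real.toNNReal (gaussianPDFReal 0 1 x)) • Real.exp (t * x))
      = fun x => Real.exp (t ^ 2 / 2) * gaussianPDFReal t 1 x := by
    ext x
    rw [NNReal.smul_def, smul_eq_mul, Real.coe_toNNReal _ (gaussianPDFReal_nonneg 0 1 x),
      mul_comm, gauss_aux_eq]
  rw [this, integral_const_mul, integral_gaussianPDFReal_eq_one t one_ne_zero, mul_one]

/-- Let `h` be bounded measurable, `X` an `ℝⁿ`-valued random variable and `W` a standard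
Gaussian independent of `X`.  With `Z = exp(h(X)·(h(X)+W) − h(X)²/2)`, we have `E[1/Z] = 1`. -/
theorem integral_inv_likelihood_eq_one
    {Ω : Type*} [MeasurableSpace Ω] (P : Measure Ω) [IsProbabilityMeasure P]
    {n : ℕ} (h : (Fin n → ℝ) → ℝ) (X : Ω → (Fin n → ℝ)) (W : Ω → ℝ)
    (hhm : Measurable h) (K : ℝ) (hhb : ∀ x, |h x| ≤ K)
    (hXm : Measurable X) (hWm : Measurable W)
    (hW : Measure.map W P = gaussianReal 0 1)
    (hindep : IndepFun X W P) :
    ∫ ω, (Real.exp (h (X ω) * (h (X ω) + W ω) - (h (X ω)) ^ 2 / 2))⁻¹ ∂P = 1 := by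
  set μ := Measure.map X P with hμ
  have hμprob : IsProbabilityMeasure μ := Measure.isProbabilityMeasure_map hXm.aemeasurable
  set γ := gaussianReal 0 1 with hγ
  have hγprob : IsProbabilityMeasure γ := by rw [hγ]; infer_instance
  set F : (Fin n → ℝ) × ℝ → ℝ :=
    fun p => (Real.exp (h p.1 * (h p.1 + p.2) - (h p.1) ^ 2 / 2))⁻¹ with hF
  have hFm : Measurable F := by
    apply Measurable.inv
    apply Measurable.exp
    exact ((hhm.comp measurable_fst).mul ((hhm.comp measurable_fst).add
      measurable_snd)).sub (((hhm.comp measurable_fst).pow_const 2).div_const 2)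
  have hprod : Measure.map (fun ω => (X ω, W ω)) P = μ.prod γ := by
    rw [hμ, ← hW]
    exact (indepFun_iff_map_prod_eq_prod_map_map hXm.aemeasurable
      hWm.aemeasurable).mp hindep
  -- bounding function
  have hFeq : ∀ p : (Fin n → ℝ) × ℝ, F p = Real.exp (-(h p.1 * p.2) - (h p.1) ^ 2 / 2) := by
    intro p
    rw [show F p = (Real.exp (h p.1 * (h p.1 + p.2) - (h p.1) ^ 2 / 2))⁻¹ from rfl,
      ← Real.exp_neg, Real.exp_eq_exp]
    ring
  have hFbound : ∀ p : (Fin n → ℝ) × ℝ, ‖F p‖ ≤ Real.exp (|K| * |p.2|) := by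
    intro p
    rw [hFeq p, Real.norm_eq_abs, Real.abs_exp]
    apply Real.exp_le_exp.mpr
    have h1 : -(h p.1 * p.2) ≤ |h p.1| * |p.2| := by
      rw [← abs_mul]
      exact (neg_le_abs _)
    have h2 : |h p.1| ≤ |K| := le_trans (hhb p.1) (le_abs_self K)
    have h3 : (h p.1) ^ 2 / 2 ≥ 0 := by positivity
    nlinarith [abs_nonneg p.2]
  have hgint : Integrable (fun w : ℝ => Real.exp (|K| * |w|)) γ := by
    have hle : ∀ w : ℝ, ‖Real.exp (|K| * |w|)‖
        ≤ Real.exp (|K| * w) + Real.exp (-|K| * w) := by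
      intro w
      rw [Real.norm_eq_abs, Real.abs_exp]
      rcases abs_cases w with ⟨hw, _⟩ | ⟨hw, _⟩
      · rw [hw]
        have := Real.exp_pos (-|K| * w)
        linarith
      · rw [hw, mul_neg, ← neg_mul]
        have := Real.exp_pos (|K| * w)
        linarith
    exact ((integrable_exp_gaussianReal |K|).add
      (integrable_exp_gaussianReal (-|K|))).mono'
      ((measurable_const.mul (measurable_abs)).exp.aestronglyMeasurable)
      (Filter.Eventually.of_forall hle)
  have hGint : Integrable (fun p : (Fin n → ℝ) × ℝ => Real.exp (|K| * |p.2|)) (μ.prod γ) := by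
    have : Measure.map (Prod.snd : (Fin n → ℝ) × ℝ → ℝ) (μ.prod γ) = γ :=
      Measure.map_snd_prod.trans (by simp)
    have := (integrable_map_measure
      ((measurable_const.mul measurable_abs).exp.aestronglyMeasurable)
      measurable_snd.aemeasurable (μ := μ.prod γ)).mp (this ▸ hgint)
    exact this
  have hFint : Integrable F (μ.prod γ) :=
    hGint.mono' hFm.aestronglyMeasurable (Filter.Eventually.of_forall hFbound)
  calc ∫ ω, (Real.exp (h (X ω) * (h (X ω) + W ω) - (h (X ω)) ^ 2 / 2))⁻¹ ∂P
      = ∫ p, F p ∂(μ.prod γ) := by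
        rw [← hprod, integral_map (hXm.prodMk hWm).aemeasurable hFm.aestronglyMeasurable]
    _ = ∫ x, ∫ w, F (x, w) ∂γ ∂μ := integral_prod F hFint
    _ = ∫ x, (1 : ℝ) ∂μ := by
        apply integral_congr_ae
        apply Filter.Eventually.of_forall
        intro x
        show (∫ w, F (x, w) ∂γ) = 1
        have : (fun w => F (x, w))
            = fun w => Real.exp (-(h x)^2/2) * Real.exp (-(h x) * w) := by
          ext w
          rw [hFeq (x, w), ← Real.exp_add]
          ring_nf
        rw [this, integral_const_mul, integral_exp_gaussianReal, ← Real.exp_add,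
          neg_sq, neg_div, neg_add_cancel, Real.exp_zero]
    _ = 1 := by simp
end

section
/- Kallianpur–Striebel-type identity for a single observation: Let X be an ℝⁿ-valued random variable, h : ℝⁿ → ℝ bounded measurable, W ~ N(0,1) independent of X, and Y = h(X) + W. Define a new measure Q by dQ/dP = exp(−h(X)·Y + h(X)²/2). Then under Q, Y is standard Gaussian and is independent of X, and X has the same law under Q as under P. -/
open MeasureTheory ProbabilityTheory Real

lemma gaussian_density_shift (m : ℝ) :
    (gaussianReal m 1).withDensity
      (fun y => ENNReal.ofReal (Real.exp (-m * y + m ^ 2 / 2))) = gaussianReal 0 1 := by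
  rw [gaussianReal_of_var_ne_zero m one_ne_zero, gaussianReal_of_var_ne_zero 0 one_ne_zero,
    ← withDensity_mul _ (measurable_gaussianPDF m 1)
      (by fun_prop : Measurable fun y => ENNReal.ofReal (Real.exp (-m * y + m ^ 2 / 2)))]
  congr 1
  ext y
  rw [Pi.mul_apply, gaussianPDF, gaussianPDF, ← ENNReal.ofReal_mul (gaussianPDFReal_nonneg _ _ _)]
  congr 1
  simp only [gaussianPDFReal]
  rw [mul_assoc, ← Real.exp_add]
  norm_num
  ring_nf
  simp

/-- Change of measure: with `Y = h(X) + W`, `W ~ N(0,1)` independent of `X`, and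
`Q` defined by `dQ/dP = exp(−h(X)·Y + h(X)²/2)`, under `Q` the observation `Y` is standard
Gaussian, `Y` is independent of `X`, and `X` has the same law under `Q` as under `P`. -/
theorem change_of_measure_single_observation
    {Ω : Type*} [MeasurableSpace Ω] (P : Measure Ω) [IsProbabilityMeasure P]
    {n : ℕ} (h : (Fin n → ℝ) → ℝ) (X : Ω → (Fin n → ℝ)) (W : Ω → ℝ)
    (hhm : Measurable h) (K : ℝ) (hhb : ∀ x, |h x| ≤ K)
    (hXm : Measurable X) (hWm : Measurable W)
    (hW : Measure.map W P = gaussianReal 0 1)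
    (hindep : IndepFun X W P) :
    let Y : Ω → ℝ := fun ω => h (X ω) + W ω
    let Q : Measure Ω := P.withDensity
      (fun ω => ENNReal.ofReal (Real.exp (-(h (X ω)) * Y ω + (h (X ω)) ^ 2 / 2)))
    IsProbabilityMeasure Q ∧
      Measure.map Y Q = gaussianReal 0 1 ∧
      IndepFun X Y Q ∧
      Measure.map X Q = Measure.map X P := by
  intro Y Q
  set μ : Measure (Fin n → ℝ) := Measure.map X P with hμ
  haveI : IsProbabilityMeasure μ := Measure.isProbabilityMeasure_map hXm.aemeasurable
  set γ : Measure ℝ := gaussianReal 0 1 with hγ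
  have hYm : Measurable Y := (hhm.comp hXm).add hWm
  have hXYm : Measurable (fun ω => (X ω, Y ω)) := hXm.prodMk hYm
  set φ : (Fin n → ℝ) × ℝ → ENNReal :=
    fun p => ENNReal.ofReal (Real.exp (-(h p.1) * p.2 + (h p.1) ^ 2 / 2)) with hφ
  have hφm : Measurable φ := by fun_prop
  have hQ : Q = P.withDensity (fun ω => φ (X ω, Y ω)) := rfl
  set T : (Fin n → ℝ) × ℝ → (Fin n → ℝ) × ℝ := fun p => (p.1, h p.1 + p.2) with hT
  have hTm : Measurable T := measurable_fst.prodMk ((hhm.comp measurable_fst).add measurable_snd)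
  -- Step 2: map (X,Y) Q = (map (X,Y) P).withDensity φ
  have step2 : Measure.map (fun ω => (X ω, Y ω)) Q
      = (Measure.map (fun ω => (X ω, Y ω)) P).withDensity φ := by
    ext s hs
    rw [Measure.map_apply hXYm hs, hQ, withDensity_apply _ (hXYm hs),
      withDensity_apply _ hs, setLIntegral_map hs hφm hXYm]
  -- Step 3: map (X,Y) P = map T (μ.prod γ)
  have hXW : Measure.map (fun ω => (X ω, W ω)) P = μ.prod γ := by
    have h2 := (indepFun_iff_map_prod_eq_prod_map_map hXm.aemeasurable hWm.aemeasurable).mp hindep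
    rw [hW] at h2
    exact h2
  have step3 : Measure.map (fun ω => (X ω, Y ω)) P = Measure.map T (μ.prod γ) := by
    rw [← hXW, Measure.map_map hTm (hXm.prodMk hWm)]
    rfl
  -- Step 4 / key: joint law under Q
  have key : Measure.map (fun ω => (X ω, Y ω)) Q = μ.prod γ := by
    rw [step2, step3]
    ext s hs
    rw [withDensity_apply _ hs, setLIntegral_map hs hφm hTm,
      ← lintegral_indicator (hTm hs) _]
    have hint : AEMeasurable (fun p => (T ⁻¹' s).indicator (fun x => φ (T x)) p) (μ.prod γ) :=
      ((hφm.comp hTm).indicator (hTm hs)).aemeasurable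
    rw [lintegral_prod _ hint, Measure.prod_apply hs]
    congr 1
    ext x
    have hsx : MeasurableSet (Prod.mk x ⁻¹' s) := measurable_prodMk_left hs
    calc ∫⁻ w, (T ⁻¹' s).indicator (fun p => φ (T p)) (x, w) ∂γ
        = ∫⁻ w, (Prod.mk x ⁻¹' s).indicator (fun y => φ (x, y)) (h x + w) ∂γ := by
          refine lintegral_congr fun w => ?_
          by_cases hmem : (x, h x + w) ∈ s
          · rw [Set.indicator_of_mem (by exact hmem) (fun p => φ (T p)),
              Set.indicator_of_mem (by exact hmem) (fun y => φ (x, y))]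
          · rw [Set.indicator_of_notMem (by exact hmem) (fun p => φ (T p)),
              Set.indicator_of_notMem (by exact hmem) (fun y => φ (x, y))]
      _ = ∫⁻ y, (Prod.mk x ⁻¹' s).indicator (fun y => φ (x, y)) y ∂(gaussianReal (h x) 1) := by
          have hfm : Measurable (fun y => (Prod.mk x ⁻¹' s).indicator (fun y => φ (x, y)) y) :=
            (hφm.comp (measurable_const.prodMk measurable_id)).indicator hsx
          rw [show gaussianReal (h x) 1 = Measure.map (fun w => h x + w) γ by
                rw [hγ, gaussianReal_map_const_add, zero_add],
            lintegral_map hfm (measurable_const_add _)]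
      _ = ((gaussianReal (h x) 1).withDensity (fun y => φ (x, y))) (Prod.mk x ⁻¹' s) := by
          rw [lintegral_indicator hsx _, withDensity_apply _ hsx]
      _ = γ (Prod.mk x ⁻¹' s) := by
          rw [hγ, ← gaussian_density_shift (h x)]
  -- Conclusions
  have hQprob : IsProbabilityMeasure Q := by
    constructor
    have := congrArg (fun ν : Measure ((Fin n → ℝ) × ℝ) => ν Set.univ) key
    simpa [Measure.map_apply hXYm MeasurableSet.univ] using this
  haveI := hQprob
  have hmapY : Measure.map Y Q = γ := by
    have : Measure.map Y Q = Measure.map Prod.snd (Measure.map (fun ω => (X ω, Y ω)) Q) := by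
      rw [Measure.map_map measurable_snd hXYm]; rfl
    rw [this, key, show Measure.map Prod.snd (μ.prod γ) = (μ.prod γ).snd from rfl,
      Measure.snd_prod]
  have hmapX : Measure.map X Q = μ := by
    have : Measure.map X Q = Measure.map Prod.fst (Measure.map (fun ω => (X ω, Y ω)) Q) := by
      rw [Measure.map_map measurable_fst hXYm]; rfl
    rw [this, key, show Measure.map Prod.fst (μ.prod γ) = (μ.prod γ).fst from rfl,
      Measure.fst_prod]
  refine ⟨hQprob, hmapY, ?_, hmapX⟩
  rw [indepFun_iff_map_prod_eq_prod_map_map hXm.aemeasurable hYm.aemeasurable, key, hmapX, hmapY]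
end

section
/- Kallianpur–Striebel formula (single observation): With the setup above (Y = h(X) + W, Z = exp(h(X)Y − h(X)²/2), Q defined by dQ/dP = Z^{-1}), for any bounded measurable φ : ℝⁿ → ℝ, E_P[φ(X) | σ(Y)] = E_Q[Z·φ(X) | σ(Y)] / E_Q[Z | σ(Y)], P-almost surely. -/
open MeasureTheory ProbabilityTheory
open scoped NNReal ENNReal

open Real in
lemma integrable_exp_abs_mul_gaussian (K : ℝ) :
    Integrable (fun x : ℝ => Real.exp (K * |x|)) (gaussianReal 0 1) := by
  rw [gaussianReal_of_var_ne_zero 0 one_ne_zero,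
    integrable_withDensity_iff (measurable_gaussianPDF 0 1)
      (Filter.Eventually.of_forall fun x => ENNReal.ofReal_lt_top)]
  have hequ : ∀ x : ℝ, Real.exp (K * |x|) * (gaussianPDF 0 1 x).toReal
      = (√(2 * π * (1 : ℝ≥0)))⁻¹ * Real.exp (K * |x| + (- (x - 0)^2 / (2 * (1 : ℝ≥0)))) := by
    intro x
    rw [gaussianPDF, ENNReal.toReal_ofReal (gaussianPDFReal_nonneg 0 1 x), gaussianPDFReal,
      Real.exp_add]
    ring
  refine Integrable.mono'
    (g := fun x => (√(2 * π * (1 : ℝ≥0)))⁻¹ * (Real.exp (2 * K ^ 2) * Real.exp (-(3/8 : ℝ) * x ^ 2)))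
    (((integrable_exp_neg_mul_sq (by norm_num : (0:ℝ) < 3/8)).const_mul _).const_mul _)
    ?_ (Filter.Eventually.of_forall fun x => ?_)
  · exact ((measurable_abs.const_mul K).exp.mul
      (measurable_gaussianPDF 0 1).ennreal_toReal).aestronglyMeasurable
  · have h1 : 0 ≤ Real.exp (K * |x|) * (gaussianPDF 0 1 x).toReal :=
      mul_nonneg (Real.exp_pos _).le ENNReal.toReal_nonneg
    rw [Real.norm_eq_abs, abs_of_nonneg h1, hequ]
    refine mul_le_mul_of_nonneg_left ?_ (by positivity)
    rw [← Real.exp_add]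
    apply Real.exp_le_exp.mpr
    have hx : |x| ^ 2 = x ^ 2 := sq_abs x
    have h2 : (0:ℝ) ≤ (|x| - 4 * K) ^ 2 := sq_nonneg _
    simp only [NNReal.coe_one, sub_zero, mul_one]
    nlinarith [sq_nonneg (|x| - 4 * K), sq_abs x]


lemma setIntegral_withDensity_toNNReal {Ω : Type*} {m0 : MeasurableSpace Ω} (Q : Measure Ω)
    {Z : Ω → ℝ} (hZm : Measurable Z) (hZ0 : ∀ ω, 0 ≤ Z ω) (g : Ω → ℝ) (s : Set Ω)
    (hs : MeasurableSet s) :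
    ∫ ω in s, g ω ∂(Q.withDensity fun ω => ((Real.toNNReal (Z ω) : ℝ≥0) : ℝ≥0∞))
      = ∫ ω in s, Z ω * g ω ∂Q := by
  rw [restrict_withDensity hs, integral_withDensity_eq_integral_smul hZm.real_toNNReal]
  refine integral_congr_ae (Filter.Eventually.of_forall fun ω => ?_)
  simp [NNReal.smul_def, Real.coe_toNNReal _ (hZ0 ω)]

lemma integrable_exp_abs_mul_comp {Ω : Type*} {m0 : MeasurableSpace Ω} (P : Measure Ω)
    (K : ℝ) (W : Ω → ℝ) (hWm : Measurable W)
    (hW : Measure.map W P = gaussianReal 0 1) :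
    Integrable (fun ω => Real.exp (K * |W ω|)) P := by
  have hgm : AEStronglyMeasurable (fun x : ℝ => Real.exp (K * |x|)) (Measure.map W P) :=
    ((measurable_abs.const_mul K).exp).aestronglyMeasurable
  have := (integrable_map_measure hgm hWm.aemeasurable).mp
    (by rw [hW]; exact integrable_exp_abs_mul_gaussian K)
  exact this

/-- Kallianpur–Striebel formula for a single observation: with `Y = h(X) + W`,
`Z = exp(h(X)Y − h(X)²/2)` and `Q` given by `dQ/dP = Z⁻¹`, for any bounded measurable `φ`,
`E_P[φ(X) | σ(Y)] = E_Q[Z φ(X) | σ(Y)] / E_Q[Z | σ(Y)]` holds `P`-a.s. -/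
theorem kallianpur_striebel_single_observation
    {Ω : Type*} [m0 : MeasurableSpace Ω] (P : Measure Ω) [IsProbabilityMeasure P]
    {n : ℕ} (h : (Fin n → ℝ) → ℝ) (X : Ω → (Fin n → ℝ)) (W : Ω → ℝ)
    (hhm : Measurable h) (K : ℝ) (hhb : ∀ x, |h x| ≤ K)
    (hXm : Measurable X) (hWm : Measurable W)
    (hW : Measure.map W P = gaussianReal 0 1)
    (hindep : IndepFun X W P)
    (φ : (Fin n → ℝ) → ℝ) (hφm : Measurable φ) (Mφ : ℝ) (hφb : ∀ x, |φ x| ≤ Mφ)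
    (Y : Ω → ℝ) (hYdef : Y = fun ω => h (X ω) + W ω)
    (Z : Ω → ℝ) (hZdef : Z = fun ω => Real.exp (h (X ω) * Y ω - (h (X ω)) ^ 2 / 2))
    (Q : Measure Ω)
    (hQdef : Q = P.withDensity (fun ω => ENNReal.ofReal (Z ω)⁻¹))
    (mY : MeasurableSpace Ω) (hmYdef : mY = MeasurableSpace.comap Y inferInstance)
    (hden : ∀ᵐ ω ∂Q, 0 < (Q[Z | mY]) ω) :
    ∀ᵐ ω ∂P, (P[fun ω => φ (X ω) | mY]) ω =
      (Q[fun ω => Z ω * φ (X ω) | mY]) ω / (Q[Z | mY]) ω := by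
  have hM0 : 0 ≤ Mφ := (abs_nonneg _).trans (hφb 0)
  have hYm : Measurable[m0] Y := by rw [hYdef]; exact (hhm.comp hXm).add hWm
  have hZm : Measurable[m0] Z := by
    rw [hZdef]
    exact (((hhm.comp hXm).mul hYm).sub (((hhm.comp hXm).pow_const 2).div_const 2)).exp
  have hZpos : ∀ ω, 0 < Z ω := by intro ω; rw [hZdef]; exact Real.exp_pos _
  have hm : mY ≤ m0 := by rw [hmYdef]; exact measurable_iff_comap_le.mp hYm
  -- integrability of f = φ ∘ X under P
  have hfm : Measurable[m0] (fun ω => φ (X ω)) := hφm.comp hXm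
  have hf_int : Integrable (fun ω => φ (X ω)) P :=
    (integrable_const Mφ).mono' hfm.aestronglyMeasurable
      (Filter.Eventually.of_forall fun ω => by
        rw [Real.norm_eq_abs]; exact hφb (X ω))
  -- Z⁻¹ is bounded by exp (K * |W|), which is integrable
  have hZinv_le : ∀ ω, (Z ω)⁻¹ ≤ Real.exp (K * |W ω|) := by
    intro ω
    rw [hZdef, ← Real.exp_neg]
    apply Real.exp_le_exp.mpr
    rw [hYdef]
    have h1 : |h (X ω)| ≤ K := hhb _
    have h2 : -(h (X ω) * W ω) ≤ |h (X ω) * W ω| := neg_le_abs _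
    have h3 : |h (X ω) * W ω| = |h (X ω)| * |W ω| := abs_mul _ _
    have h4 : |h (X ω)| * |W ω| ≤ K * |W ω| :=
      mul_le_mul_of_nonneg_right h1 (abs_nonneg _)
    nlinarith [sq_nonneg (h (X ω))]
  have hEexp : Integrable (fun ω => Real.exp (K * |W ω|)) P :=
    integrable_exp_abs_mul_comp P K W hWm hW
  have hZinv_int : Integrable (fun ω => (Z ω)⁻¹) P :=
    hEexp.mono' hZm.inv.aestronglyMeasurable
      (Filter.Eventually.of_forall fun ω => by
        rw [Real.norm_eq_abs, abs_of_pos (inv_pos.mpr (hZpos ω))]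
        exact hZinv_le ω)
  -- Q is a finite measure
  have hQfin : IsFiniteMeasure Q := by
    rw [hQdef]
    exact isFiniteMeasure_withDensity_ofReal hZinv_int.2
  haveI := hQfin
  haveI : SigmaFinite (Q.trim hm) := (isFiniteMeasure_trim (μ := Q) hm).toSigmaFinite
  haveI : SigmaFinite (P.trim hm) := (isFiniteMeasure_trim (μ := P) hm).toSigmaFinite
  -- P = Q.withDensity Z
  have hPQ : P = Q.withDensity (fun ω => ((Real.toNNReal (Z ω) : ℝ≥0) : ℝ≥0∞)) := by
    have hco : (fun ω => ((Real.toNNReal (Z ω) : ℝ≥0) : ℝ≥0∞))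
        = fun ω => ENNReal.ofReal (Z ω) := rfl
    rw [hQdef, hco, ← withDensity_mul _ (f := fun ω => ENNReal.ofReal (Z ω)⁻¹) (hZm.inv.ennreal_ofReal) (hZm.ennreal_ofReal)]
    have : (fun ω => ENNReal.ofReal (Z ω)⁻¹) * (fun ω => ENNReal.ofReal (Z ω))
        = fun _ => (1 : ℝ≥0∞) := by
      funext ω
      rw [Pi.mul_apply, ← ENNReal.ofReal_mul (inv_pos.mpr (hZpos ω)).le,
        inv_mul_cancel₀ (hZpos ω).ne', ENNReal.ofReal_one]
    rw [this]
    exact (withDensity_one (μ := P)).symm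
  have hPQac : P ≪ Q := by
    rw [hPQ]; exact withDensity_absolutelyContinuous _ _
  have hwZm : Measurable[m0] (fun ω => Real.toNNReal (Z ω)) := hZm.real_toNNReal
  -- transfer of integrability and set integrals between P and Q
  have hPQint : ∀ g : Ω → ℝ, Integrable g P ↔ Integrable (fun ω => Z ω * g ω) Q := by
    intro g
    rw [hPQ, integrable_withDensity_iff_integrable_coe_smul hwZm]
    refine integrable_congr (Filter.Eventually.of_forall fun ω => ?_)
    simp [Real.coe_toNNReal _ (hZpos ω).le]
  have hPQsint : ∀ (g : Ω → ℝ) (s : Set Ω), MeasurableSet[m0] s →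
      ∫ ω in s, g ω ∂P = ∫ ω in s, Z ω * g ω ∂Q := by
    intro g s hs
    rw [hPQ]
    exact setIntegral_withDensity_toNNReal Q hZm (fun ω => (hZpos ω).le) g s hs
  -- integrability under Q
  have hZQ_int : Integrable Z Q := by
    have := (hPQint (fun _ => (1 : ℝ))).mp (integrable_const 1)
    simpa using this
  have hZfQ_int : Integrable (fun ω => Z ω * φ (X ω)) Q := (hPQint _).mp hf_int
  -- notation for the two conditional expectations
  set N : Ω → ℝ := Q[fun ω => Z ω * φ (X ω)|mY] with hNdef
  set D : Ω → ℝ := Q[Z|mY] with hDdef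
  have hNm : StronglyMeasurable[mY] N := stronglyMeasurable_condExp
  have hDm : StronglyMeasurable[mY] D := stronglyMeasurable_condExp
  -- bound |N| ≤ Mφ * D a.e.
  have hub : (fun ω => Z ω * φ (X ω)) ≤ᵐ[Q] Mφ • Z :=
    Filter.Eventually.of_forall fun ω => by
      have := (abs_le.mp (hφb (X ω))).2
      calc Z ω * φ (X ω) ≤ Z ω * Mφ := mul_le_mul_of_nonneg_left this (hZpos ω).le
        _ = (Mφ • Z) ω := by simp [mul_comm]
  have hlb : (-(Mφ • Z) : Ω → ℝ) ≤ᵐ[Q] (fun ω => Z ω * φ (X ω)) :=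
    Filter.Eventually.of_forall fun ω => by
      have := (abs_le.mp (hφb (X ω))).1
      have h2 : Z ω * (-Mφ) ≤ Z ω * φ (X ω) := mul_le_mul_of_nonneg_left this (hZpos ω).le
      simpa [mul_comm] using h2
  have habs : ∀ᵐ ω ∂Q, |N ω| ≤ Mφ * D ω := by
    have h1 : N ≤ᵐ[Q] Q[Mφ • Z|mY] := condExp_mono hZfQ_int (hZQ_int.smul Mφ) hub
    have h2 : Q[(-(Mφ • Z) : Ω → ℝ)|mY] ≤ᵐ[Q] N :=
      condExp_mono (hZQ_int.smul Mφ).neg hZfQ_int hlb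
    have h3 : Q[Mφ • Z|mY] =ᵐ[Q] Mφ • D := condExp_smul Mφ Z mY
    have h4 : Q[(-(Mφ • Z) : Ω → ℝ)|mY] =ᵐ[Q] -(Mφ • D) :=
      (condExp_neg _ mY).trans ((condExp_smul Mφ Z mY).neg)
    filter_upwards [h1, h2, h3, h4] with ω e1 e2 e3 e4
    rw [abs_le]
    constructor
    · have := e2; rw [e4] at this; simpa using this
    · have := e1; rw [e3] at this; simpa using this
  -- the candidate g and its properties
  have hDpos := hden
  have hgbound : ∀ᵐ ω ∂Q, |N ω / D ω| ≤ Mφ := by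
    filter_upwards [habs, hDpos] with ω h1 h2
    rw [abs_div, abs_of_pos h2, div_le_iff₀ h2]
    exact h1
  have hgsm : StronglyMeasurable[mY] (fun ω => N ω / D ω) :=
    (hNm.measurable.div hDm.measurable).stronglyMeasurable
  have hg_intP : Integrable (fun ω => N ω / D ω) P := by
    refine (integrable_const Mφ).mono'
      ((hgsm.mono hm).aestronglyMeasurable) ?_
    filter_upwards [hPQac.ae_le hgbound] with ω hω
    rwa [Real.norm_eq_abs]
  have hgZ_int : Integrable (fun ω => Z ω * (N ω / D ω)) Q := (hPQint _).mp hg_intP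
  have hgZ_int' : Integrable ((fun ω => N ω / D ω) * Z) Q := by
    refine hgZ_int.congr (Filter.Eventually.of_forall fun ω => ?_)
    simp [mul_comm]
  -- the key pull-out computation
  have hpull : Q[(fun ω => N ω / D ω) * Z|mY] =ᵐ[Q] (fun ω => N ω / D ω) * D :=
    condExp_mul_of_stronglyMeasurable_left hgsm hgZ_int' hZQ_int
  have hcancel : (fun ω => N ω / D ω) * D =ᵐ[Q] N := by
    filter_upwards [hDpos] with ω hω
    simp only [Pi.mul_apply]
    rw [div_mul_cancel₀ _ hω.ne']
  -- main set-integral identity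
  have hg_eq : ∀ s : Set Ω, MeasurableSet[mY] s → P s < ⊤ →
      ∫ ω in s, (N ω / D ω) ∂P = ∫ ω in s, φ (X ω) ∂P := by
    intro s hs _
    have hs0 : MeasurableSet[m0] s := hm s hs
    calc ∫ ω in s, (N ω / D ω) ∂P
        = ∫ ω in s, Z ω * (N ω / D ω) ∂Q := hPQsint _ s hs0
      _ = ∫ ω in s, ((fun ω => N ω / D ω) * Z) ω ∂Q := by
          refine integral_congr_ae (Filter.Eventually.of_forall fun ω => ?_)
          simp [mul_comm]
      _ = ∫ ω in s, (Q[(fun ω => N ω / D ω) * Z|mY]) ω ∂Q :=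
          (setIntegral_condExp hm hgZ_int' hs).symm
      _ = ∫ ω in s, N ω ∂Q := by
          refine integral_congr_ae (ae_restrict_of_ae ?_)
          filter_upwards [hpull, hcancel] with ω h1 h2
          rw [h1, h2]
      _ = ∫ ω in s, Z ω * φ (X ω) ∂Q := setIntegral_condExp hm hZfQ_int hs
      _ = ∫ ω in s, φ (X ω) ∂P := (hPQsint _ s hs0).symm
  exact (ae_eq_condExp_of_forall_setIntegral_eq hm hf_int
    (fun s _ _ => hg_intP.mono_measure Measure.restrict_le_self) hg_eq (hgsm.aestronglyMeasurable)).symm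
end
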